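/- arXiv:2002.03155 — 3 statements merged into one kernel-verified Lean document; each statement's English description precedes it below -/
import Mathlib

section
/- Let G = (V,E) be a finite simple graph, let M be a matching of G, and let k ≥ 1 be an integer. If G contains no M-augmenting path of length at most 2k−1, then (k+1)·|M| ≥ k·ν(G), i.e., |M| ≥ (k/(k+1))·ν(G). -/
/-- A matching of a graph `G`: a set `M` of edges of `G`, no two of which share a vertex. -/
def IsMatchingSet {V : Type} (G : SimpleGraph V) (M : Set (Sym2 V)) : Prop :=
  M ⊆ G.edgeSet ∧ ∀ e ∈ M, ∀ f ∈ M, e ≠ f → ∀ v : V, ¬(v ∈ e ∧ v ∈ f)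

/-- `ν(G)`: the maximum cardinality of a matching of the finite graph `G`. -/
noncomputable def matchingNumber {V : Type} [Fintype V] (G : SimpleGraph V) : ℕ :=
  sSup {n : ℕ | ∃ M : Set (Sym2 V), IsMatchingSet G M ∧ M.ncard = n}

/-- A vertex is `M`-exposed if it is not an endpoint of any edge of `M`. -/
def Exposed {V : Type} (M : Set (Sym2 V)) (v : V) : Prop :=
  ∀ e ∈ M, v ∉ e

/-- An `M`-augmenting path: a simple path in `G` both of whose endpoints are `M`-exposed
and whose edges alternate between `E \ M` and `M` (starting and ending with edges not
in `M`, i.e. the `i`-th edge belongs to `M` iff `i` is odd). -/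
def IsAugPath {V : Type} (G : SimpleGraph V) (M : Set (Sym2 V)) {u w : V}
    (p : G.Walk u w) : Prop :=
  p.IsPath ∧ 0 < p.length ∧ Exposed M u ∧ Exposed M w ∧
    ∀ (i : ℕ) (h : i < p.edges.length), (p.edges[i] ∈ M ↔ i % 2 = 1)

/-!
Let `N` be a maximum matching, `A = N \ M` and `B = M \ N`. From every vertex covered by `A` but
not by `B`, follow the maximal chain that alternates between edges of `A` and edges of `B`; it is a
path. A chain of odd length ends at a vertex exposed by `M`, so it is an `M`-augmenting path,
longer than `2k` by hypothesis, and its `k` first `B`-edges are met by no other chain except its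
own reversal. A chain of even length ends at a vertex covered by `B` but not by `A`. Counting ends
gives `2|A| - 2|B| ≤ s` and `k s ≤ 2|B|` for the number `s` of odd chains, hence
`k|A| ≤ (k+1)|B|`; adding `|N ∩ M|` to both sides gives the claim.
-/

open SimpleGraph

variable {V : Type} {G : SimpleGraph V}

def Covers (F : Set (Sym2 V)) (v : V) : Prop := ∃ w, s(v, w) ∈ F

namespace IsMatchingSet

variable {F F' : Set (Sym2 V)}

theorem mono (hF : IsMatchingSet G F) (h : F' ⊆ F) : IsMatchingSet G F' :=
  ⟨h.trans hF.1, fun e he f hf => hF.2 e (h he) f (h hf)⟩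

theorem eq_of_mem (hF : IsMatchingSet G F) {v a b : V} (ha : s(v, a) ∈ F)
    (hb : s(v, b) ∈ F) : a = b := by
  by_contra hne
  exact hF.2 _ ha _ hb (fun h => hne (Sym2.congr_right.mp h)) v
    ⟨Sym2.mem_mk_left v a, Sym2.mem_mk_left v b⟩

theorem ncard_setOf_covers [Finite V] (hF : IsMatchingSet G F) :
    {v | Covers F v}.ncard = 2 * F.ncard := by
  classical
  have := Fintype.ofFinite V
  have hcov : {v | Covers F v} = ↑(F.toFinset.biUnion Sym2.toFinset) := by
    ext v
    simp only [Covers, Set.mem_ofPred_eq, Finset.coe_biUnion, Finset.mem_coe, Set.mem_toFinset,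
      Sym2.mem_toFinset, Set.mem_iUnion, exists_prop]
    constructor
    · rintro ⟨w, hw⟩
      exact ⟨_, hw, Sym2.mem_mk_left v w⟩
    · rintro ⟨e, he, hv⟩
      obtain ⟨w, rfl⟩ := Sym2.mem_iff_exists.mp hv
      exact ⟨w, he⟩
  rw [hcov, Set.ncard_coe_finset, Finset.card_biUnion, Finset.sum_const_nat (m := 2),
    Set.ncard_eq_toFinset_card', mul_comm]
  · intro e he
    exact e.card_toFinset_of_not_isDiag
      (G.not_isDiag_of_mem_edgeSet (hF.1 (Set.mem_toFinset.mp he)))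
  · intro e he f hf hne
    refine Finset.disjoint_left.mpr fun v hve hvf => ?_
    exact hF.2 e (Set.mem_toFinset.mp he) f (Set.mem_toFinset.mp hf) hne v
      ⟨Sym2.mem_toFinset.mp hve, Sym2.mem_toFinset.mp hvf⟩

end IsMatchingSet

theorem exists_isMatchingSet_ncard_eq_matchingNumber [Fintype V] (G : SimpleGraph V) :
    ∃ N, IsMatchingSet G N ∧ N.ncard = matchingNumber G :=
  Nat.sSup_mem (s := {n | ∃ N, IsMatchingSet G N ∧ N.ncard = n})
    ⟨0, ∅, ⟨Set.empty_subset _, by simp⟩, Set.ncard_empty _⟩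
    ⟨Nat.card (Sym2 V), by rintro n ⟨F, -, rfl⟩; exact Set.ncard_le_card F⟩

theorem exposed_of_covers_sdiff {M N : Set (Sym2 V)} (hN : IsMatchingSet G N) {v : V}
    (hNM : Covers (N \ M) v) (hMN : ¬Covers (M \ N) v) : Exposed M v := by
  rintro e he hv
  obtain ⟨a, ha⟩ := hNM
  obtain ⟨w, rfl⟩ := Sym2.mem_iff_exists.mp hv
  by_cases hw : s(v, w) ∈ N
  · exact ha.2 (hN.eq_of_mem hw ha.1 ▸ he)
  · exact hMN ⟨w, he, hw⟩

theorem SimpleGraph.exists_walk_of_adj (c : ℕ → V) :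
    ∀ L, (∀ i < L, G.Adj (c i) (c (i + 1))) → ∃ p : G.Walk (c 0) (c L),
      p.support = (List.range (L + 1)).map c ∧
      p.edges = (List.range L).map fun i => s(c i, c (i + 1))
  | 0, _ => ⟨Walk.nil, by simp, by simp⟩
  | L + 1, h => by
    obtain ⟨p, hs, he⟩ := exists_walk_of_adj c L fun i hi => h i (by omega)
    refine ⟨p.concat (h L (by omega)), ?_, ?_⟩
    · rw [Walk.support_concat, hs, List.range_succ (n := L + 1)]; simp
    · rw [Walk.edges_concat, he, List.range_succ (n := L)]; simp

def altColor (A B : Set (Sym2 V)) (i : ℕ) : Set (Sym2 V) := if i % 2 = 0 then A else B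

section AltChain

variable {A B : Set (Sym2 V)} {i j : ℕ}

theorem altColor_of_even (h : i % 2 = 0) : altColor A B i = A := if_pos h

theorem altColor_of_odd (h : i % 2 = 1) : altColor A B i = B := if_neg (by omega)

theorem altColor_congr (h : i % 2 = j % 2) : altColor A B i = altColor A B j := by
  simp only [altColor, h]

theorem IsMatchingSet.altColor (hA : IsMatchingSet G A) (hB : IsMatchingSet G B) (i : ℕ) :
    IsMatchingSet G (altColor A B i) := by
  unfold _root_.altColor; split_ifs <;> assumption

def IsAltChain (A B : Set (Sym2 V)) (c : ℕ → V) (L : ℕ) : Prop :=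
  ∀ i < L, s(c i, c (i + 1)) ∈ altColor A B i

namespace IsAltChain

variable {c c' : ℕ → V} {L L' : ℕ}

theorem mono (hc : IsAltChain A B c L) (h : L' ≤ L) : IsAltChain A B c L' :=
  fun i hi => hc i (by omega)

theorem covers_succ (hc : IsAltChain A B c L) (hi : i < L) :
    Covers (altColor A B i) (c (i + 1)) :=
  ⟨c i, Sym2.eq_swap ▸ hc i hi⟩

theorem adj (hA : IsMatchingSet G A) (hB : IsMatchingSet G B) (hc : IsAltChain A B c L)
    (hi : i < L) : G.Adj (c i) (c (i + 1)) :=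
  (hA.altColor hB i).1 (hc i hi)

theorem eq_of_succ_eq (hA : IsMatchingSet G A) (hB : IsMatchingSet G B)
    (hc : IsAltChain A B c L) (hc' : IsAltChain A B c' L') {i i' : ℕ} (hi : i < L)
    (hi' : i' < L') (hpar : i % 2 = i' % 2) (h : c (i + 1) = c' (i' + 1)) : c i = c' i' := by
  have e : s(c (i + 1), c i) ∈ altColor A B i := Sym2.eq_swap ▸ hc i hi
  have e' : s(c' (i' + 1), c' i') ∈ altColor A B i :=
    altColor_congr hpar ▸ Sym2.eq_swap ▸ hc' i' hi'
  exact (hA.altColor hB i).eq_of_mem (h ▸ e) e'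

/-- A first repeated vertex would be met twice by edges of the same matching, or be `c 0` met by
an edge of `B`. -/
theorem ne_of_lt (hA : IsMatchingSet G A) (hB : IsMatchingSet G B) (hc : IsAltChain A B c L)
    (h0 : ¬Covers B (c 0)) : ∀ {i j}, i < j → j ≤ L → c i ≠ c j := by
  intro i j
  induction j generalizing i with
  | zero => omega
  | succ j ih =>
    intro hij hj heq
    have hin : s(c (j + 1), c j) ∈ altColor A B j := Sym2.eq_swap ▸ hc j (by omega)
    rw [← heq] at hin
    rcases Nat.lt_succ_iff_lt_or_eq.mp hij with hij | rfl
    · by_cases hpar : i % 2 = j % 2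
      · have hout := altColor_congr hpar ▸ hc i (by omega)
        exact ih (by omega) (by omega) ((hA.altColor hB j).eq_of_mem hout hin)
      · obtain _ | i := i
        · rw [altColor_of_odd (by omega)] at hin
          exact h0 ⟨c j, hin⟩
        · have hprev : s(c (i + 1), c i) ∈ altColor A B j :=
            altColor_congr (i := i) (j := j) (by omega) ▸ Sym2.eq_swap ▸ hc i (by omega)
          exact ih (by omega) (by omega) ((hA.altColor hB j).eq_of_mem hprev hin)
    · exact (hc.adj hA hB (by omega)).ne heq

theorem eq_add_of_last_eq (hA : IsMatchingSet G A) (hB : IsMatchingSet G B)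
    (hc : IsAltChain A B c L) {d : ℕ} (hc' : IsAltChain A B c' (L + d)) (hd : d % 2 = 0)
    (h : c L = c' (L + d)) : ∀ i ≤ L, c i = c' (i + d) := by
  suffices ∀ n ≤ L, c (L - n) = c' (L - n + d) by
    intro i hi
    simpa [Nat.sub_sub_self hi] using this (L - i) (Nat.sub_le L i)
  intro n
  induction n with
  | zero => simpa using h
  | succ n ih =>
    intro hn
    refine hc.eq_of_succ_eq hA hB hc' (by omega) (by omega) (by omega) ?_
    rw [show L - (n + 1) + 1 = L - n by omega, show L - (n + 1) + d + 1 = L - n + d by omega]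
    exact ih (by omega)

theorem length_eq_and_head_eq_of_last_eq_of_le (hA : IsMatchingSet G A)
    (hB : IsMatchingSet G B) (hc : IsAltChain A B c L) (hc' : IsAltChain A B c' L')
    (h0 : ¬Covers B (c 0)) (hle : L ≤ L') (hpar : L % 2 = L' % 2) (h : c L = c' L') :
    L = L' ∧ c 0 = c' 0 := by
  obtain ⟨d, rfl⟩ := Nat.exists_eq_add_of_le hle
  have hhead := hc.eq_add_of_last_eq hA hB hc' (by omega) h 0 (Nat.zero_le _)
  rw [zero_add] at hhead
  obtain _ | d := d
  · exact ⟨rfl, hhead⟩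
  · have hcov := hc'.covers_succ (i := d) (by omega)
    rw [altColor_of_odd (by omega), ← hhead] at hcov
    exact absurd hcov h0

theorem length_eq_and_head_eq_of_last_eq (hA : IsMatchingSet G A) (hB : IsMatchingSet G B)
    (hc : IsAltChain A B c L) (hc' : IsAltChain A B c' L') (h0 : ¬Covers B (c 0))
    (h0' : ¬Covers B (c' 0)) (hpar : L % 2 = L' % 2) (h : c L = c' L') :
    L = L' ∧ c 0 = c' 0 := by
  rcases le_total L L' with hle | hle
  · exact length_eq_and_head_eq_of_last_eq_of_le hA hB hc hc' h0 hle hpar h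
  · obtain ⟨hL, hhead⟩ :=
      length_eq_and_head_eq_of_last_eq_of_le hA hB hc' hc h0' hle hpar.symm h.symm
    exact ⟨hL.symm, hhead.symm⟩

end IsAltChain

def IsMaxAltChain (A B : Set (Sym2 V)) (c : ℕ → V) (L : ℕ) : Prop :=
  IsAltChain A B c L ∧ ¬Covers (altColor A B L) (c L)

theorem exists_isMaxAltChain [Finite V] (hA : IsMatchingSet G A) (hB : IsMatchingSet G B)
    {u : V} (hu : ¬Covers B u) : ∃ c L, c 0 = u ∧ IsMaxAltChain A B c L := by
  have hstep (i : ℕ) (v : V) :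
      ∃ w, Covers (altColor A B i) v → s(v, w) ∈ altColor A B i := by
    by_cases h : Covers (altColor A B i) v
    · obtain ⟨w, hw⟩ := h
      exact ⟨w, fun _ => hw⟩
    · exact ⟨v, fun h' => absurd h' h⟩
  choose next hnext using hstep
  let c : ℕ → V := fun n => Nat.rec u next n
  have hend : ∃ L, ¬Covers (altColor A B L) (c L) := by
    by_contra! hall
    have hchain (L : ℕ) : IsAltChain A B c L := fun i _ => hnext i (c i) (hall i)
    obtain ⟨i, j, hij, heq⟩ := Finite.exists_ne_map_eq_of_infinite c
    rcases hij.lt_or_gt with h | h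
    · exact (hchain j).ne_of_lt hA hB hu h le_rfl heq
    · exact (hchain i).ne_of_lt hA hB hu h le_rfl heq.symm
  classical
  refine ⟨c, Nat.find hend, rfl, fun i hi => hnext i (c i) ?_, Nat.find_spec hend⟩
  by_contra h
  exact Nat.find_min hend hi h

theorem IsMaxAltChain.pos {c : ℕ → V} {L : ℕ}
    (hc : IsMaxAltChain A B c L) (h0 : Covers A (c 0)) :
    0 < L :=
  Nat.pos_of_ne_zero fun hL => hc.2 (hL ▸ h0)

end AltChain

theorem IsAltChain.exists_isAugPath {M N : Set (Sym2 V)} {c : ℕ → V} {L : ℕ}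
    (hN : IsMatchingSet G N) (hM : IsMatchingSet G M) (hc : IsAltChain (N \ M) (M \ N) c L)
    (h0 : ¬Covers (M \ N) (c 0)) (hL : ¬Covers (M \ N) (c L)) (hodd : L % 2 = 1) :
    ∃ p : G.Walk (c 0) (c L), IsAugPath G M p ∧ p.length = L := by
  have hA : IsMatchingSet G (N \ M) := hN.mono Set.sdiff_subset
  have hB : IsMatchingSet G (M \ N) := hM.mono Set.sdiff_subset
  obtain ⟨p, hsupp, hedges⟩ := exists_walk_of_adj c L fun i hi => hc.adj hA hB hi
  have hlen : p.length = L := by simp [← p.length_edges, hedges]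
  refine ⟨p, ⟨?_, by omega, ?_, ?_, fun i hi => ?_⟩, hlen⟩
  · rw [Walk.isPath_def, hsupp]
    refine List.Nodup.map_on (fun i hi j hj hij => ?_) List.nodup_range
    rw [List.mem_range] at hi hj
    by_contra hne
    rcases lt_or_gt_of_ne hne with h | h
    · exact hc.ne_of_lt hA hB h0 h (by omega) hij
    · exact hc.ne_of_lt hA hB h0 h (by omega) hij.symm
  · exact exposed_of_covers_sdiff hN ⟨c 1, hc 0 (by omega)⟩ h0
  · have hcov := hc.covers_succ (i := L - 1) (by omega)
    rw [Nat.sub_add_cancel (by omega), altColor_of_even (by omega)] at hcov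
    exact exposed_of_covers_sdiff hN hcov hL
  · have hiL : i < L := by simpa [hedges] using hi
    simp only [hedges, List.getElem_map, List.getElem_range]
    rcases Nat.mod_two_eq_zero_or_one i with h | h
    · have he := altColor_of_even h ▸ hc i hiL
      simp [he.2, h]
    · have he := altColor_of_odd h ▸ hc i hiL
      simp [he.1, h]

section Counting

variable [Finite V] {A B : Set (Sym2 V)} {c : V → ℕ → V} {L : V → ℕ}

/-- `L u` stands for the length of the maximal alternating chain starting at `u`. -/
def oddHeads (A B : Set (Sym2 V)) (L : V → ℕ) : Set V :=
  {u | Covers A u ∧ ¬Covers B u ∧ L u % 2 = 1}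

/-- The chains of even length end at distinct vertices covered by `B` but not by `A`, while the
vertices covered by `A` but not by `B` outnumber those by `2|A| - 2|B|`. -/
theorem two_mul_ncard_le_add_ncard_oddHeads (hA : IsMatchingSet G A) (hB : IsMatchingSet G B)
    (hc : ∀ u, ¬Covers B u → c u 0 = u ∧ IsMaxAltChain A B (c u) (L u)) :
    2 * A.ncard ≤ 2 * B.ncard + (oddHeads A B L).ncard := by
  set X := {v | Covers A v}
  set Y := {v | Covers B v}
  have hX := Set.ncard_inter_add_ncard_sdiff_eq_ncard X Y
  have hY := Set.ncard_inter_add_ncard_sdiff_eq_ncard Y X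
  rw [Set.inter_comm] at hY
  have hXA : X.ncard = 2 * A.ncard := hA.ncard_setOf_covers
  have hYB : Y.ncard = 2 * B.ncard := hB.ncard_setOf_covers
  have hS := Set.ncard_inter_add_ncard_sdiff_eq_ncard (X \ Y) {u | L u % 2 = 1}
  have hodd : (X \ Y) ∩ {u | L u % 2 = 1} = oddHeads A B L :=
    Set.ext fun _ => and_assoc
  have heven : ((X \ Y) \ {u | L u % 2 = 1}).ncard ≤ (Y \ X).ncard := by
    refine Set.ncard_le_ncard_of_injOn (fun u => c u (L u)) ?_ ?_ (Set.toFinite _)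
    · rintro u ⟨⟨hAu, hBu⟩, hLu⟩
      replace hLu : L u % 2 = 0 := by simpa using hLu
      obtain ⟨hu0, hchain, hmax⟩ := hc u hBu
      have hpos := IsMaxAltChain.pos ⟨hchain, hmax⟩ (by rwa [hu0])
      have hcov := hchain.covers_succ (i := L u - 1) (by omega)
      rw [Nat.sub_add_cancel hpos, altColor_of_odd (by omega)] at hcov
      rw [altColor_of_even hLu] at hmax
      exact ⟨hcov, hmax⟩
    · rintro u ⟨⟨-, hBu⟩, hLu⟩ u' ⟨⟨-, hBu'⟩, hLu'⟩ heq
      obtain ⟨hu0, hchain, -⟩ := hc u hBu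
      obtain ⟨hu0', hchain', -⟩ := hc u' hBu'
      simp only [Set.mem_ofPred_eq] at hLu hLu'
      have hhead := (hchain.length_eq_and_head_eq_of_last_eq hA hB hchain' (by rwa [hu0])
        (by rwa [hu0']) (by omega) heq).2
      rwa [hu0, hu0'] at hhead
  rw [← hodd]
  omega

/-- The vertices `c u (2 * j + 1)` with `j < k` are covered by `B`, and an alternating chain is
determined by its last vertex and the parity of its length. -/
theorem mul_ncard_oddHeads_le (hA : IsMatchingSet G A) (hB : IsMatchingSet G B)
    (hc : ∀ u, ¬Covers B u → c u 0 = u ∧ IsMaxAltChain A B (c u) (L u)) (k : ℕ)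
    (hlong : ∀ u, ¬Covers B u → L u % 2 = 1 → 2 * k < L u) :
    k * (oddHeads A B L).ncard ≤ 2 * B.ncard := by
  have hprod : (oddHeads A B L ×ˢ Set.Iio k).ncard = k * (oddHeads A B L).ncard := by
    rw [Set.ncard_prod, mul_comm]; simp
  rw [← hprod, ← hB.ncard_setOf_covers]
  refine Set.ncard_le_ncard_of_injOn (fun q => c q.1 (2 * q.2 + 1)) ?_ ?_ (Set.toFinite _)
  · rintro ⟨u, j⟩ ⟨⟨-, hBu, hLu⟩, hj⟩
    rw [Set.mem_Iio] at hj
    have hlt : 2 * j + 1 < L u := by have := hlong u hBu hLu; omega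
    have he := (hc u hBu).2.1 _ hlt
    rw [altColor_of_odd (by omega)] at he
    exact ⟨_, he⟩
  · rintro ⟨u, j⟩ ⟨⟨-, hBu, hLu⟩, hj⟩ ⟨u', j'⟩ ⟨⟨-, hBu', hLu'⟩, hj'⟩ heq
    obtain ⟨hu0, hchain, -⟩ := hc u hBu
    obtain ⟨hu0', hchain', -⟩ := hc u' hBu'
    have hk := hlong u hBu hLu
    have hk' := hlong u' hBu' hLu'
    simp only [Set.mem_Iio] at hj hj'
    obtain ⟨hjj, huu⟩ :=
      (hchain.mono (L' := 2 * j + 1) (by omega)).length_eq_and_head_eq_of_last_eq hA hB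
        (hchain'.mono (L' := 2 * j' + 1) (by omega)) (by rwa [hu0]) (by rwa [hu0']) (by omega) heq
    rw [hu0, hu0'] at huu
    exact Prod.ext huu (by omega)

theorem mul_ncard_le_of_forall_odd_chain (hA : IsMatchingSet G A) (hB : IsMatchingSet G B)
    (k : ℕ) (hlong : ∀ c L, IsAltChain A B c L → ¬Covers B (c 0) → ¬Covers B (c L) →
      L % 2 = 1 → 2 * k < L) :
    k * A.ncard ≤ (k + 1) * B.ncard := by
  have hmax (u : V) :
      ∃ cL : (ℕ → V) × ℕ, ¬Covers B u → cL.1 0 = u ∧ IsMaxAltChain A B cL.1 cL.2 := by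
    by_cases hu : Covers B u
    · exact ⟨(fun _ => u, 0), fun h => absurd hu h⟩
    · obtain ⟨c, L, h⟩ := exists_isMaxAltChain hA hB hu
      exact ⟨(c, L), fun _ => h⟩
  choose cL hcL using hmax
  have h1 := two_mul_ncard_le_add_ncard_oddHeads hA hB hcL
  have h2 := mul_ncard_oddHeads_le hA hB hcL k fun u hu hodd => by
    obtain ⟨hu0, hchain, hend⟩ := hcL u hu
    rw [altColor_of_odd hodd] at hend
    exact hlong _ _ hchain (by rwa [hu0]) hend hodd
  nlinarith

end Counting

theorem stmt_7_general (V : Type) [Fintype V] (G : SimpleGraph V)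
    (M : Set (Sym2 V)) (hM : IsMatchingSet G M) (k : ℕ)
    (hno : ∀ (u w : V) (p : G.Walk u w), IsAugPath G M p → ¬(p.length ≤ 2 * k - 1)) :
    k * matchingNumber G ≤ (k + 1) * M.ncard := by
  obtain ⟨N, hN, hNcard⟩ := exists_isMatchingSet_ncard_eq_matchingNumber G
  have hsdiff : k * (N \ M).ncard ≤ (k + 1) * (M \ N).ncard := by
    refine mul_ncard_le_of_forall_odd_chain (hN.mono Set.sdiff_subset) (hM.mono Set.sdiff_subset)
      k fun c L hc h0 hL hodd => ?_
    obtain ⟨p, hp, hlen⟩ := hc.exists_isAugPath hN hM h0 hL hodd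
    have := hno _ _ p hp
    omega
  have hN' := Set.ncard_inter_add_ncard_sdiff_eq_ncard N M
  have hM' := Set.ncard_inter_add_ncard_sdiff_eq_ncard M N
  rw [Set.inter_comm] at hM'
  rw [← hNcard]
  nlinarith

/-- Let `G` be a finite simple graph, `M` a matching of `G`, and `k ≥ 1`.
If `G` contains no `M`-augmenting path of length at most `2k − 1`, then
`(k+1) · |M| ≥ k · ν(G)`. -/
theorem stmt_7 (V : Type) [Fintype V] (G : SimpleGraph V)
    (M : Set (Sym2 V)) (hM : IsMatchingSet G M) (k : ℕ) (hk : 1 ≤ k)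
    (hno : ∀ (u w : V) (p : G.Walk u w), IsAugPath G M p → ¬(p.length ≤ 2 * k - 1)) :
    k * matchingNumber G ≤ (k + 1) * M.ncard :=
  stmt_7_general V G M hM k hno
end

section
/- Let G = (V,E) be a finite simple graph with maximum degree at most Δ, and fix a linear order ≺ on V. Consider the greedy procedure: start with S = ∅; while the closed neighborhood N[S] does not cover V, add to S the ≺-least vertex among the vertices v maximizing the number of newly dominated vertices |N[v] \ N[S]|. Then the procedure terminates with a dominating set S of G satisfying |S| ≤ H(Δ+1)·γ(G), where H(k) = Σ_{i=1}^{k} 1/i is the k-th harmonic number. -/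
/-- A dominating set of a graph `G`: every vertex either lies in `S` or is adjacent to a
vertex of `S`. -/
def IsDomSet {V : Type} (G : SimpleGraph V) (S : Set V) : Prop :=
  ∀ v : V, v ∈ S ∨ ∃ u ∈ S, G.Adj u v

/-- `γ(G)`: the minimum cardinality of a dominating set of the finite graph `G`. -/
noncomputable def dominationNumber {V : Type} [Fintype V] (G : SimpleGraph V) : ℕ :=
  sInf {n : ℕ | ∃ S : Set V, IsDomSet G S ∧ S.ncard = n}

open Classical in
/-- The closed neighborhood `N[S]` of a finite set of vertices, as a `Finset`. -/
noncomputable def closedNbhdF {V : Type} [Fintype V] (G : SimpleGraph V)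
    (S : Finset V) : Finset V :=
  S ∪ Finset.univ.filter (fun w => ∃ u ∈ S, G.Adj u w)

open Classical in
/-- The number `|N[v] \ N[S]|` of vertices newly dominated when `v` is added to `S`. -/
noncomputable def greedyGain {V : Type} [Fintype V] (G : SimpleGraph V)
    (S : Finset V) (v : V) : ℕ :=
  (closedNbhdF G {v} \ closedNbhdF G S).card

open Classical in
/-- One step of the greedy procedure: if `N[S]` does not yet cover `V`, add the least
vertex (in the fixed linear order) among the vertices maximizing the number of newly
dominated vertices `|N[v] \ N[S]|`. -/
noncomputable def greedyStep {V : Type} [Fintype V] [LinearOrder V]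
    (G : SimpleGraph V) (S : Finset V) : Finset V :=
  if closedNbhdF G S = Finset.univ then S
  else
    let maximizers :=
      Finset.univ.filter (fun v => greedyGain G S v = Finset.univ.sup (greedyGain G S))
    if h : maximizers.Nonempty then insert (maximizers.min' h) S else S

/-- The greedy procedure, started from `S = ∅` (it terminates within `|V|` steps). -/
noncomputable def greedyDomSet {V : Type} [Fintype V] [LinearOrder V]
    (G : SimpleGraph V) : Finset V :=
  (greedyStep G)^[Fintype.card V] ∅

/-!
Chvátal's charging argument for greedy set cover. When the greedy step at time `t` newly
dominates the set `Cₜ`, each vertex of `Cₜ` is charged `1 / |Cₜ|`, so the greedy set has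
at most as many vertices as the total charge. Fix a minimum dominating set `D` and some
`d ∈ D`. While `u` vertices of `N[d]` are still undominated, greedy optimality gives
`|Cₜ| ≥ u`, so the vertices of `N[d]` dominated at that step are charged at most
`H(u) - H(u')` in total, `u'` being the number left afterwards. Telescoping bounds the
charge on `N[d]` by `H(|N[d]|) ≤ H(Δ + 1)`, and the sets `N[d]` cover `V`.
-/

open Finset

theorem harmonic_mono : Monotone harmonic := fun _ _ hmn =>
  sum_le_sum_of_subset_of_nonneg (range_subset_range.2 hmn) fun _ _ _ => by positivity

theorem div_le_harmonic_sub_harmonic {m n k : ℕ} (hmn : m ≤ n) (hnk : n ≤ k) :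
    ((n - m : ℕ) : ℚ) / k ≤ harmonic n - harmonic m := by
  rw [harmonic, harmonic, ← sum_Ico_eq_sub _ hmn]
  calc ((n - m : ℕ) : ℚ) / k = ∑ _i ∈ Ico m n, (k : ℚ)⁻¹ := by
        rw [sum_const, Nat.card_Ico, nsmul_eq_mul, div_eq_mul_inv]
    _ ≤ ∑ i ∈ Ico m n, ((i + 1 : ℕ) : ℚ)⁻¹ := by
        gcongr with i hi
        exact (mem_Ico.1 hi).2.trans_le hnk

theorem sum_card_inter_div_le_harmonic {α : Type*} [DecidableEq α] (C : ℕ → Finset α)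
    (hC : Monotone C) (A : Finset α) (hA : ∀ t, #(A \ C t) ≤ #(C (t + 1) \ C t)) (T : ℕ) :
    ∑ t ∈ range T, (#(A ∩ (C (t + 1) \ C t)) : ℚ) / #(C (t + 1) \ C t) ≤
      harmonic #(A \ C 0) := by
  have hsub : ∀ t, A \ C (t + 1) ⊆ A \ C t := fun t =>
    sdiff_subset_sdiff subset_rfl (hC t.le_succ)
  have hcard : ∀ t, #(A ∩ (C (t + 1) \ C t)) = #(A \ C t) - #(A \ C (t + 1)) := fun t => by
    rw [← card_sdiff_of_subset (hsub t)]
    congr 1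
    ext x
    simp only [mem_inter, mem_sdiff]
    tauto
  calc ∑ t ∈ range T, (#(A ∩ (C (t + 1) \ C t)) : ℚ) / #(C (t + 1) \ C t)
      ≤ ∑ t ∈ range T, (harmonic #(A \ C t) - harmonic #(A \ C (t + 1))) := by
        gcongr with t
        rw [hcard]
        exact div_le_harmonic_sub_harmonic (card_le_card (hsub t)) (hA t)
    _ = harmonic #(A \ C 0) - harmonic #(A \ C T) := sum_range_sub' _ _
    _ ≤ harmonic #(A \ C 0) := sub_le_self _ (harmonic_zero ▸ harmonic_mono (Nat.zero_le _))

section ClosedNbhd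

variable {V : Type} [Fintype V] (G : SimpleGraph V)

theorem mem_closedNbhdF {S : Finset V} {w : V} :
    w ∈ closedNbhdF G S ↔ w ∈ S ∨ ∃ u ∈ S, G.Adj u w := by
  classical
  simp [closedNbhdF]

theorem closedNbhdF_mono {S T : Finset V} (h : S ⊆ T) :
    closedNbhdF G S ⊆ closedNbhdF G T := fun w => by
  simp only [mem_closedNbhdF]
  exact Or.imp (@h w) fun ⟨u, hu, huw⟩ => ⟨u, h hu, huw⟩

@[simp]
theorem closedNbhdF_empty : closedNbhdF G ∅ = ∅ := by
  ext
  simp [mem_closedNbhdF]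

theorem closedNbhdF_insert [DecidableEq V] (v : V) (S : Finset V) :
    closedNbhdF G (insert v S) = closedNbhdF G {v} ∪ closedNbhdF G S := by
  ext w
  simp only [mem_union, mem_closedNbhdF, mem_insert, mem_singleton, exists_eq_or_imp,
    exists_eq_left]
  tauto

theorem mem_closedNbhdF_singleton {v w : V} : w ∈ closedNbhdF G {v} ↔ w = v ∨ G.Adj v w := by
  simp [mem_closedNbhdF]

theorem self_mem_closedNbhdF_singleton (v : V) : v ∈ closedNbhdF G {v} :=
  (mem_closedNbhdF_singleton G).2 (.inl rfl)

theorem coe_closedNbhdF_singleton (v : V) :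
    (closedNbhdF G {v} : Set V) = insert v (G.neighborSet v) := by
  ext w
  simp [mem_closedNbhdF_singleton, eq_comm]

theorem card_closedNbhdF_singleton_le {Δ : ℕ} (hdeg : ∀ v : V, (G.neighborSet v).ncard ≤ Δ)
    (v : V) : #(closedNbhdF G {v}) ≤ Δ + 1 := by
  rw [← Set.ncard_coe_finset, coe_closedNbhdF_singleton]
  exact (Set.ncard_insert_le _ _).trans (Nat.add_le_add_right (hdeg v) 1)

theorem isDomSet_iff_closedNbhdF_eq_univ (S : Finset V) :
    IsDomSet G S ↔ closedNbhdF G S = univ := by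
  simp [IsDomSet, eq_univ_iff_forall, mem_closedNbhdF]

theorem card_le_sum_card_closedNbhdF_inter [DecidableEq V] {D : Finset V}
    (hD : IsDomSet G D) (s : Finset V) : #s ≤ ∑ d ∈ D, #(closedNbhdF G {d} ∩ s) := by
  refine (card_le_card fun x hx => ?_).trans card_biUnion_le
  obtain hxD | ⟨d, hd, hdx⟩ := hD x
  · exact mem_biUnion.2 ⟨x, hxD, mem_inter.2 ⟨self_mem_closedNbhdF_singleton G x, hx⟩⟩
  · exact mem_biUnion.2
      ⟨d, hd, mem_inter.2 ⟨(mem_closedNbhdF_singleton G).2 (.inr hdx), hx⟩⟩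

theorem exists_isDomSet_card_eq_dominationNumber :
    ∃ D : Finset V, IsDomSet G D ∧ #D = dominationNumber G := by
  obtain ⟨D, hD, hcard⟩ := Nat.sInf_mem (s := {n | ∃ S : Set V, IsDomSet G S ∧ S.ncard = n})
    ⟨_, Set.univ, fun v => .inl trivial, rfl⟩
  refine ⟨D.toFinite.toFinset, by simpa using hD, ?_⟩
  rw [dominationNumber, ← hcard, Set.ncard_eq_toFinset_card]

theorem greedyGain_eq_card_sdiff [DecidableEq V] (S : Finset V) (v : V) :
    greedyGain G S v = #(closedNbhdF G {v} \ closedNbhdF G S) := by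
  unfold greedyGain
  convert rfl

end ClosedNbhd

section Greedy

variable {V : Type} [Fintype V] [LinearOrder V] (G : SimpleGraph V)

theorem greedyStep_of_closedNbhdF_eq_univ {S : Finset V} (h : closedNbhdF G S = univ) :
    greedyStep G S = S :=
  if_pos h

theorem exists_greedyStep_eq_insert {S : Finset V} (h : closedNbhdF G S ≠ univ) :
    ∃ v, greedyStep G S = insert v S ∧ ∀ w, greedyGain G S w ≤ greedyGain G S v := by
  obtain ⟨x, -⟩ := not_forall.1 (mt eq_univ_iff_forall.2 h)
  obtain ⟨v₀, -, hv₀⟩ := exists_mem_eq_sup univ ⟨x, mem_univ x⟩ (greedyGain G S)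
  have hM : (univ.filter fun v => greedyGain G S v = univ.sup (greedyGain G S)).Nonempty :=
    ⟨v₀, mem_filter.2 ⟨mem_univ _, hv₀.symm⟩⟩
  refine ⟨_, by rw [greedyStep, if_neg h, dif_pos hM], fun w => ?_⟩
  rw [(mem_filter.1 (min'_mem _ hM)).2]
  exact le_sup (mem_univ w)

theorem subset_greedyStep (S : Finset V) : S ⊆ greedyStep G S := by
  by_cases h : closedNbhdF G S = univ
  · rw [greedyStep_of_closedNbhdF_eq_univ G h]
  · obtain ⟨v, hv, -⟩ := exists_greedyStep_eq_insert G h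
    exact hv ▸ subset_insert v S

noncomputable def greedyIter (t : ℕ) : Finset V :=
  (greedyStep G)^[t] ∅

noncomputable def newlyDominated (t : ℕ) : Finset V :=
  closedNbhdF G (greedyIter G (t + 1)) \ closedNbhdF G (greedyIter G t)

@[simp]
theorem greedyIter_zero : greedyIter G 0 = ∅ :=
  rfl

theorem greedyIter_succ (t : ℕ) : greedyIter G (t + 1) = greedyStep G (greedyIter G t) :=
  Function.iterate_succ_apply' _ _ _

theorem monotone_closedNbhdF_greedyIter :
    Monotone fun t => closedNbhdF G (greedyIter G t) :=
  monotone_nat_of_le_succ fun t =>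
    closedNbhdF_mono G (greedyIter_succ G t ▸ subset_greedyStep G _)

theorem greedyGain_le_card_newlyDominated (t : ℕ) (w : V) :
    greedyGain G (greedyIter G t) w ≤ #(newlyDominated G t) := by
  rw [greedyGain_eq_card_sdiff]
  by_cases h : closedNbhdF G (greedyIter G t) = univ
  · rw [h, sdiff_eq_empty_iff_subset.2 (subset_univ _), card_empty]
    exact Nat.zero_le _
  · obtain ⟨v, hv, hmax⟩ := exists_greedyStep_eq_insert G h
    rw [newlyDominated, greedyIter_succ, hv, closedNbhdF_insert, union_sdiff_right,
      ← greedyGain_eq_card_sdiff, ← greedyGain_eq_card_sdiff]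
    exact hmax w

theorem newlyDominated_nonempty {t : ℕ} (h : closedNbhdF G (greedyIter G t) ≠ univ) :
    (newlyDominated G t).Nonempty := by
  obtain ⟨x, hx⟩ := not_forall.1 (mt eq_univ_iff_forall.2 h)
  have hgain : 0 < greedyGain G (greedyIter G t) x := by
    rw [greedyGain_eq_card_sdiff, card_pos]
    exact ⟨x, mem_sdiff.2 ⟨self_mem_closedNbhdF_singleton G x, hx⟩⟩
  exact card_pos.1 (hgain.trans_le (greedyGain_le_card_newlyDominated G t x))

theorem closedNbhdF_greedyIter_eq_univ_or_le_card (t : ℕ) :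
    closedNbhdF G (greedyIter G t) = univ ∨ t ≤ #(closedNbhdF G (greedyIter G t)) := by
  induction t with
  | zero => exact .inr (Nat.zero_le _)
  | succ t ih =>
    by_cases h : closedNbhdF G (greedyIter G t) = univ
    · left
      rwa [greedyIter_succ, greedyStep_of_closedNbhdF_eq_univ G h]
    · right
      have hlt : closedNbhdF G (greedyIter G t) ⊂ closedNbhdF G (greedyIter G (t + 1)) := by
        rw [ssubset_iff_of_subset (monotone_closedNbhdF_greedyIter G t.le_succ)]
        simpa only [newlyDominated, Finset.Nonempty, mem_sdiff] using
          newlyDominated_nonempty G h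
      exact (ih.resolve_left h).trans_lt (card_lt_card hlt)

theorem isDomSet_greedyDomSet : IsDomSet G (greedyDomSet G) := by
  rw [isDomSet_iff_closedNbhdF_eq_univ]
  refine (closedNbhdF_greedyIter_eq_univ_or_le_card G (Fintype.card V)).elim id fun h => ?_
  exact eq_univ_of_card _ (le_antisymm (card_le_univ _) h)

/-- Each step adds at most one vertex, and only when it dominates something new;
`x / x` is `1`, or `0` when `x = 0`. -/
theorem card_greedyIter_le (T : ℕ) :
    (#(greedyIter G T) : ℚ) ≤
      ∑ t ∈ range T, (#(newlyDominated G t) : ℚ) / #(newlyDominated G t) := by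
  induction T with
  | zero => simp
  | succ T ih =>
    rw [sum_range_succ, greedyIter_succ]
    by_cases h : closedNbhdF G (greedyIter G T) = univ
    · rw [greedyStep_of_closedNbhdF_eq_univ G h]
      have : (0 : ℚ) ≤ #(newlyDominated G T) / #(newlyDominated G T) := by positivity
      linarith
    · obtain ⟨v, hv, -⟩ := exists_greedyStep_eq_insert G h
      rw [hv, div_self (by exact_mod_cast (newlyDominated_nonempty G h).card_pos.ne')]
      exact (Nat.cast_le.2 (card_insert_le v _)).trans (by push_cast; linarith)

theorem sum_card_closedNbhdF_inter_newlyDominated_div_le_harmonic (d : V) (T : ℕ) :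
    ∑ t ∈ range T, (#(closedNbhdF G {d} ∩ newlyDominated G t) : ℚ) /
        #(newlyDominated G t) ≤ harmonic #(closedNbhdF G {d}) := by
  have hgreedy : ∀ t, #(closedNbhdF G {d} \ closedNbhdF G (greedyIter G t)) ≤
      #(newlyDominated G t) := fun t => by
    simpa only [greedyGain_eq_card_sdiff] using greedyGain_le_card_newlyDominated G t d
  simpa [newlyDominated] using
    sum_card_inter_div_le_harmonic _ (monotone_closedNbhdF_greedyIter G) _ hgreedy T

theorem card_greedyIter_le_sum_harmonic {D : Finset V} (hD : IsDomSet G D) (T : ℕ) :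
    (#(greedyIter G T) : ℚ) ≤ ∑ d ∈ D, harmonic #(closedNbhdF G {d}) :=
  calc (#(greedyIter G T) : ℚ)
      ≤ ∑ t ∈ range T, (#(newlyDominated G t) : ℚ) / #(newlyDominated G t) :=
        card_greedyIter_le G T
    _ ≤ ∑ t ∈ range T, ∑ d ∈ D,
          (#(closedNbhdF G {d} ∩ newlyDominated G t) : ℚ) / #(newlyDominated G t) := by
        gcongr with t
        rw [← sum_div]
        gcongr
        exact_mod_cast card_le_sum_card_closedNbhdF_inter G hD _
    _ = ∑ d ∈ D, ∑ t ∈ range T,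
          (#(closedNbhdF G {d} ∩ newlyDominated G t) : ℚ) / #(newlyDominated G t) :=
        sum_comm
    _ ≤ ∑ d ∈ D, harmonic #(closedNbhdF G {d}) :=
        sum_le_sum fun d _ => sum_card_closedNbhdF_inter_newlyDominated_div_le_harmonic G d T

theorem card_greedyDomSet_le {Δ : ℕ} (hdeg : ∀ v : V, (G.neighborSet v).ncard ≤ Δ)
    {D : Finset V} (hD : IsDomSet G D) :
    (#(greedyDomSet G) : ℚ) ≤ harmonic (Δ + 1) * #D :=
  calc (#(greedyDomSet G) : ℚ) ≤ ∑ d ∈ D, harmonic #(closedNbhdF G {d}) :=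
        card_greedyIter_le_sum_harmonic G hD _
    _ ≤ ∑ _d ∈ D, harmonic (Δ + 1) :=
        sum_le_sum fun d _ => harmonic_mono (card_closedNbhdF_singleton_le G hdeg d)
    _ = harmonic (Δ + 1) * #D := by rw [sum_const, nsmul_eq_mul, mul_comm]

end Greedy

/-- For a finite simple graph `G` with maximum degree at most `Δ` and a fixed
linear order on `V`, the greedy procedure terminates with a dominating set `S` of `G`
satisfying `|S| ≤ H(Δ+1) · γ(G)`, where `H(k) = ∑_{i=1}^{k} 1/i`. -/
theorem stmt_8 (Δ : ℕ) (V : Type) [Fintype V] [LinearOrder V] (G : SimpleGraph V)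
    (hdeg : ∀ v : V, (G.neighborSet v).ncard ≤ Δ) :
    IsDomSet G (↑(greedyDomSet G) : Set V) ∧
    ((greedyDomSet G).card : ℝ) ≤
      (∑ i ∈ Finset.range (Δ + 1), (1 : ℝ) / (i + 1)) * dominationNumber G := by
  obtain ⟨D, hD, hDcard⟩ := exists_isDomSet_card_eq_dominationNumber G
  refine ⟨isDomSet_greedyDomSet G, ?_⟩
  have hH : ∑ i ∈ range (Δ + 1), (1 : ℝ) / (i + 1) = harmonic (Δ + 1) := by
    simp [harmonic]
  rw [hH, ← hDcard]
  exact_mod_cast card_greedyDomSet_le G hdeg hD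
end

section
/- For every integer Δ ≥ 1, every finite set 𝒞 ⊂ ℝ^{d_I}, every finite set D ⊂ ℝ^{d_r}, and every positive integer l, there exist GIN parameters θ such that for all finite connected simple graphs G = (V,E) and G' = (V',E') with maximum degree at most Δ, vertex features x_v ∈ 𝒞 (resp. x'_{v'} ∈ 𝒞), labelings r ∈ D^V and r' ∈ D^{V'}, and vertices v ∈ V, v' ∈ V': if the level-l trees satisfy T(G,v,l) ≠ T(G',v',l) (computed with vertex labels a_u = (x_u, r_u)), then the GIN run on G with input features h_u = (x_u, r_u) and the GIN run on G' with input features h'_{u'} = (x'_{u'}, r'_{u'}) produce different output embeddings at v and v', i.e., z_v ≠ z'_{v'}. -/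
/-- An MLP: a finite alternating composition of affine maps and the entrywise ReLU
activation `x ↦ max(x, 0)`. -/
inductive IsMLP : ∀ (a b : ℕ), ((Fin a → ℝ) → (Fin b → ℝ)) → Prop
  | affine (a b : ℕ) (W : Fin b → Fin a → ℝ) (c : Fin b → ℝ) :
      IsMLP a b (fun x i => (∑ j, W i j * x j) + c i)
  | comp (a b c : ℕ) (f : (Fin a → ℝ) → (Fin b → ℝ)) (g : (Fin b → ℝ) → (Fin c → ℝ)) :
      IsMLP a b f → IsMLP b c g →
      IsMLP a c (fun x => g (fun i => max (f x i) 0))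

/-- GIN parameters `θ`: a depth `K`, layer dimensions, MLPs `MLP_0, …, MLP_K`, and reals
`ε^(1), …, ε^(K)`; the last layer has dimension `dOut`. -/
structure GINParams (dIn dOut : ℕ) where
  K : ℕ
  dims : ℕ → ℕ
  hdims : dims K = dOut
  mlp0 : (Fin dIn → ℝ) → (Fin (dims 0) → ℝ)
  mlp : (l : ℕ) → (Fin (dims l) → ℝ) → (Fin (dims (l + 1)) → ℝ)
  eps : ℕ → ℝ
  mlp0_spec : IsMLP dIn (dims 0) mlp0
  mlp_spec : ∀ l, IsMLP (dims l) (dims (l + 1)) (mlp l)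

open Classical in
/-- The GIN layer embeddings: `z_v^(0) = MLP_0(h_v)` and
`z_v^(l) = MLP_l((1 + ε^(l)) z_v^(l−1) + ∑_{u ∈ N(v)} z_u^(l−1))`. -/
noncomputable def GINemb {dIn dOut : ℕ} (θ : GINParams dIn dOut) {V : Type} [Fintype V]
    (G : SimpleGraph V) (h : V → Fin dIn → ℝ) : (l : ℕ) → V → Fin (θ.dims l) → ℝ
  | 0 => fun v => θ.mlp0 (h v)
  | (l + 1) => fun v => θ.mlp l (fun i =>
      (1 + θ.eps (l + 1)) * GINemb θ G h l v i +
        ∑ u ∈ G.neighborFinset v, GINemb θ G h l u i)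

/-- The GIN output embeddings `z_v = z_v^(K)`. -/
noncomputable def GINout {dIn dOut : ℕ} (θ : GINParams dIn dOut) {V : Type} [Fintype V]
    (G : SimpleGraph V) (h : V → Fin dIn → ℝ) (v : V) : Fin dOut → ℝ :=
  fun i => GINemb θ G h θ.K v (Fin.cast θ.hdims.symm i)

/-- The type of level-`l` trees with labels in `A`. -/
def TreeT (A : Type) : ℕ → Type
  | 0 => A
  | (l + 1) => TreeT A l × Multiset (TreeT A l)

open Classical in
/-- The level-`l` tree of `v` in `G` with vertex labels `a`:
`T(G, v, 0) = a_v` and `T(G, v, l) = (T(G, v, l−1), {T(G, u, l−1) : u ∈ N(v)})`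
(the second component a multiset). -/
noncomputable def levelTree {V A : Type} [Fintype V] (G : SimpleGraph V) (a : V → A) :
    (l : ℕ) → V → TreeT A l
  | 0 => fun v => a v
  | (l + 1) => fun v =>
      (levelTree G a l v, (G.neighborFinset v).val.map (levelTree G a l))

/-!
Level-`k` trees whose labels lie in a finite set and whose nodes have at most `Δ` children form a
finite set, so they can be numbered, and a tree is encoded by `B ^ (its number)` with `B = Δ + 2`.
With `1 + ε = B ^ N`, `N` exceeding every number, the GIN aggregate
`(1 + ε) · code(root) + ∑ code(child)` is a base-`B` numeral with one digit for the root above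
the digits counting the children; all digits are `< B`, so the numeral determines the tree of the
next level. An MLP can send finitely many inputs to arbitrary prescribed outputs (a sum of
`L¹`-bumps), so each layer maps the numeral to the code of the next-level tree, and by induction
the GIN outputs the (injective) code of the level-`l` tree.
-/

open Set Matrix

def relu {ι : Type*} (y : ι → ℝ) : ι → ℝ := fun i => max (y i) 0

theorem isMLP_two_hidden_layers {a b : ℕ} {ι κ : Type} [Fintype ι] [Fintype κ]
    (W₁ : Matrix ι (Fin a) ℝ) (c₁ : ι → ℝ) (W₂ : Matrix κ ι ℝ) (c₂ : κ → ℝ)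
    (W₃ : Matrix (Fin b) κ ℝ) (c₃ : Fin b → ℝ) :
    IsMLP a b fun x => W₃ *ᵥ relu (W₂ *ᵥ relu (W₁ *ᵥ x + c₁) + c₂) + c₃ := by
  let e₁ := Fintype.equivFin ι
  let e₂ := Fintype.equivFin κ
  convert ((IsMLP.affine _ _ (W₁.submatrix e₁.symm id) (c₁ ∘ e₁.symm)).comp _ _ _ _ _
    (IsMLP.affine _ _ (W₂.submatrix e₂.symm e₁.symm) (c₂ ∘ e₂.symm))).comp _ _ _ _ _
    (IsMLP.affine _ _ (W₃.submatrix id e₂.symm) c₃) using 1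
  funext x i
  simp only [relu, mulVec, dotProduct, Pi.add_apply, submatrix_apply, id, Function.comp_apply]
  congr 1
  rw [← e₂.symm.sum_comp]
  refine Finset.sum_congr rfl fun k _ => ?_
  rw [← e₁.symm.sum_comp]

noncomputable def l1Bump {a : ℕ} (M : ℝ) (s x : Fin a → ℝ) : ℝ :=
  max (1 - M * ∑ i, |x i - s i|) 0

theorem l1Bump_self {a : ℕ} (M : ℝ) (s : Fin a → ℝ) : l1Bump M s s = 1 := by
  simp [l1Bump]

theorem l1Bump_eq_zero {a : ℕ} {M : ℝ} {s x : Fin a → ℝ} (h : 1 ≤ M * ∑ i, |x i - s i|) :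
    l1Bump M s x = 0 :=
  max_eq_right (by linarith)

theorem isMLP_sum_l1Bump_smul {a b : ℕ} (S : Finset (Fin a → ℝ)) (M : ℝ) (g : S → Fin b → ℝ) :
    IsMLP a b fun x => ∑ s : S, l1Bump M s x • g s := by
  classical
  -- `|y| = relu y + relu (-y)`: the first hidden layer computes `±(x i - s i)` for all `s, i`
  convert isMLP_two_hidden_layers (ι := S × Fin a × Bool)
    (of fun q => Pi.single q.2.1 (if q.2.2 then 1 else -1))
    (fun q => if q.2.2 then -(q.1 : Fin a → ℝ) q.2.1 else (q.1 : Fin a → ℝ) q.2.1)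
    (of fun s q => if q.1 = s then -M else 0) (fun _ => 1) (of fun j s => g s j) 0 using 1
  funext x j
  simp only [relu, mulVec, dotProduct, Pi.add_apply, of_apply, Finset.sum_apply, Pi.smul_apply,
    smul_eq_mul, Pi.zero_apply, add_zero]
  refine Finset.sum_congr rfl fun s _ => ?_
  rw [mul_comm, l1Bump]
  congr 2
  simp [Fintype.sum_prod_type, Finset.mul_sum, Pi.single_apply,
    ← max_zero_add_max_neg_zero_eq_abs_self, mul_add, ← sub_eq_add_neg, neg_add_eq_sub]

theorem Set.Finite.exists_one_le_mul_sum_abs_sub {a : ℕ} {S : Set (Fin a → ℝ)} (hS : S.Finite) :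
    ∃ M : ℝ, ∀ s ∈ S, ∀ t ∈ S, s ≠ t → 1 ≤ M * ∑ i, |t i - s i| := by
  set d : (Fin a → ℝ) → (Fin a → ℝ) → ℝ := fun s t => ∑ i, |t i - s i|
  refine ⟨∑ p ∈ hS.toFinset ×ˢ hS.toFinset, (d p.1 p.2)⁻¹, fun s hs t ht hst => ?_⟩
  obtain ⟨i, hi⟩ := Function.ne_iff.1 hst.symm
  have hd : 0 < d s t :=
    Finset.sum_pos' (fun _ _ => abs_nonneg _) ⟨i, Finset.mem_univ _, abs_pos.2 (sub_ne_zero.2 hi)⟩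
  calc (1 : ℝ) = (d s t)⁻¹ * d s t := (inv_mul_cancel₀ hd.ne').symm
    _ ≤ _ := by
      gcongr
      exact Finset.single_le_sum (f := fun p => (d p.1 p.2)⁻¹)
        (fun p _ => inv_nonneg.2 (Finset.sum_nonneg fun _ _ => abs_nonneg _))
        (Finset.mk_mem_product (hS.mem_toFinset.2 hs) (hS.mem_toFinset.2 ht))

theorem exists_isMLP_eqOn {a b : ℕ} {S : Set (Fin a → ℝ)} (hS : S.Finite)
    (g : (Fin a → ℝ) → Fin b → ℝ) : ∃ f, IsMLP a b f ∧ S.EqOn f g := by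
  classical
  obtain ⟨M, hM⟩ := hS.exists_one_le_mul_sum_abs_sub
  refine ⟨_, isMLP_sum_l1Bump_smul hS.toFinset M fun s => g s, fun t ht => ?_⟩
  have ht' : t ∈ hS.toFinset := hS.mem_toFinset.2 ht
  rw [Finset.sum_eq_single ⟨t, ht'⟩]
  · simp [l1Bump_self]
  · rintro ⟨s, hs⟩ _ hst
    rw [l1Bump_eq_zero (hM s (hS.mem_toFinset.1 hs) t ht fun h => hst (Subtype.ext h)), zero_smul]
  · simp

theorem exists_isMLP_comp_eqOn {α : Type*} {a b : ℕ} {S : Set α} (hS : S.Finite)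
    {e : α → Fin a → ℝ} (he : InjOn e S) (g : α → Fin b → ℝ) :
    ∃ f, IsMLP a b f ∧ ∀ s ∈ S, f (e s) = g s := by
  have he' : Function.Injective fun s : S => e s := he.injective
  obtain ⟨f, hf, hfg⟩ :=
    exists_isMLP_eqOn (hS.image e) (Function.extend (fun s : S => e s) (fun s => g s) 0)
  refine ⟨f, hf, fun s hs => ?_⟩
  rw [hfg (mem_image_of_mem e hs)]
  exact he'.extend_apply (fun s => g s) 0 ⟨s, hs⟩

theorem Nat.ofDigits_ofFn (B : ℕ) : ∀ {K : ℕ} (f : Fin K → ℕ),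
    Nat.ofDigits B (List.ofFn f) = ∑ j, f j * B ^ (j : ℕ)
  | 0, _ => by simp
  | K + 1, f => by
    rw [List.ofFn_succ, Nat.ofDigits_cons, Nat.ofDigits_ofFn B, Fin.sum_univ_succ, Finset.mul_sum]
    simp only [Fin.val_zero, pow_zero, mul_one, Fin.val_succ, pow_succ]
    exact congrArg _ (Finset.sum_congr rfl fun j _ => by ring)

namespace Multiset

theorem sum_map_pow_eq_ofDigits (B : ℕ) {K : ℕ} {m : Multiset ℕ} (hm : ∀ i ∈ m, i < K) :
    (m.map (B ^ ·)).sum = Nat.ofDigits B (List.ofFn fun j : Fin K => m.count (j : ℕ)) := by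
  classical
  rw [Nat.ofDigits_ofFn, Fin.sum_univ_eq_sum_range (fun j => m.count j * B ^ j),
    Finset.sum_multiset_map_count]
  refine Finset.sum_subset (fun i hi => Finset.mem_range.2 (hm i (mem_toFinset.1 hi))) ?_
  intro i _ hi
  simp [count_eq_zero.2 (mt mem_toFinset.2 hi)]

theorem eq_of_sum_map_pow_eq {B : ℕ} {m m' : Multiset ℕ} (hm : card m < B)
    (hm' : card m' < B) (h : (m.map (B ^ ·)).sum = (m'.map (B ^ ·)).sum) : m = m' := by
  classical
  rcases Nat.lt_or_ge 1 B with hB | hB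
  swap
  · rw [card_eq_zero.1 (show card m = 0 by omega), card_eq_zero.1 (show card m' = 0 by omega)]
  obtain ⟨K, hK⟩ : ∃ K, ∀ i ∈ m + m', i < K :=
    ⟨(m + m').sup + 1, fun i hi => Nat.lt_succ_of_le (le_sup hi)⟩
  rw [sum_map_pow_eq_ofDigits B (fun i hi => hK i (mem_add.2 (.inl hi))),
    sum_map_pow_eq_ofDigits B (fun i hi => hK i (mem_add.2 (.inr hi)))] at h
  have hcounts := Nat.ofDigits_inj_of_len_eq hB (by simp)
    (by simpa using fun j => (count_le_card _ _).trans_lt hm)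
    (by simpa using fun j => (count_le_card _ _).trans_lt hm') h
  ext i
  by_cases hi : i < K
  · exact congrFun (List.ofFn_inj.1 hcounts) ⟨i, hi⟩
  · rw [count_eq_zero.2 fun h => hi (hK i (mem_add.2 (.inl h))),
      count_eq_zero.2 fun h => hi (hK i (mem_add.2 (.inr h)))]

end Multiset

theorem Set.InjOn.eq_of_multiset_map_eq {α β : Type*} {f : α → β} {T : Set α} (hf : InjOn f T)
    {m m' : Multiset α} (hm : ∀ t ∈ m, t ∈ T) (hm' : ∀ t ∈ m', t ∈ T)
    (h : m.map f = m'.map f) : m = m' := by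
  rcases isEmpty_or_nonempty α with hα | hα
  · exact Subsingleton.elim m m'
  have hinv : ∀ n : Multiset α, (∀ t ∈ n, t ∈ T) → (n.map f).map (Function.invFunOn f T) = n :=
    fun n hn => by
      rw [Multiset.map_map]
      exact (Multiset.map_congr rfl fun t ht => hf.leftInvOn_invFunOn (hn t ht)).trans n.map_id
  rw [← hinv m hm, ← hinv m' hm', h]

theorem Set.Finite.exists_injOn_lt {β : Type*} {T : Set β} (hT : T.Finite) :
    ∃ (N : ℕ) (f : β → ℕ), InjOn f T ∧ ∀ t ∈ T, f t < N := by
  classical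
  refine ⟨hT.toFinset.toList.length, (hT.toFinset.toList.idxOf ·), fun s hs t _ h => ?_,
    fun t ht => List.idxOf_lt_length_of_mem (by simpa using ht)⟩
  exact (List.idxOf_inj (by simpa using hs)).1 h

def boundedNodes {β : Type*} (Δ : ℕ) (T : Set β) : Set (β × Multiset β) :=
  {p | p.1 ∈ T ∧ (∀ t ∈ p.2, t ∈ T) ∧ Multiset.card p.2 ≤ Δ}

theorem finite_boundedNodes {β : Type*} {T : Set β} (hT : T.Finite) (Δ : ℕ) :
    (boundedNodes Δ T).Finite := by
  classical
  refine (hT.prod (Set.finite_Iic (Δ • hT.toFinset.val))).subset ?_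
  rintro ⟨s, m⟩ ⟨hs, hm, hcard⟩
  refine ⟨hs, Multiset.le_iff_count.2 fun t => ?_⟩
  by_cases ht : t ∈ m
  · rw [Multiset.count_nsmul,
      Multiset.count_eq_one_of_mem hT.toFinset.nodup (by simpa using hm t ht), mul_one]
    exact (Multiset.count_le_card t m).trans hcard
  · simp [Multiset.count_eq_zero.2 ht]

theorem injOn_pow_aggregate {β : Type*} {T : Set β} {f : β → ℕ} {N B Δ : ℕ} (hf : InjOn f T)
    (hfN : ∀ t ∈ T, f t < N) (hB : Δ + 1 < B) :
    InjOn (fun p : β × Multiset β => B ^ N * B ^ f p.1 + (p.2.map (B ^ f ·)).sum)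
      (boundedNodes Δ T) := by
  rintro ⟨s, m⟩ ⟨hs : s ∈ T, hm : ∀ t ∈ m, t ∈ T, hcard : Multiset.card m ≤ Δ⟩
    ⟨s', m'⟩ ⟨hs' : s' ∈ T, hm' : ∀ t ∈ m', t ∈ T, hcard' : Multiset.card m' ≤ Δ⟩ h
  -- the root's digit sits above all the children's digits
  have hdigits : ∀ (s : β) (m : Multiset β), B ^ N * B ^ f s + (m.map (B ^ f ·)).sum =
      (((N + f s) ::ₘ m.map f).map (B ^ ·)).sum := by
    intro s m
    simp [pow_add, Multiset.map_map]
  simp only [hdigits] at h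
  have hM := Multiset.eq_of_sum_map_pow_eq (by simp; omega) (by simp; omega) h
  have hroot : f s = f s' := by
    rcases Multiset.mem_cons.1 (hM ▸ Multiset.mem_cons_self (N + f s) (m.map f)) with h | h
    · omega
    · obtain ⟨t, ht, hft⟩ := Multiset.mem_map.1 h
      have := hfN t (hm' t ht)
      omega
  rw [hroot, Multiset.cons_inj_right] at hM
  rw [hf hs hs' hroot, hf.eq_of_multiset_map_eq hm hm' hM]

def ginAggregate {β : Type*} (c : ℝ) (f : β → ℝ) (p : β × Multiset β) : ℝ :=
  c * f p.1 + (p.2.map f).sum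

theorem Set.Finite.exists_injOn_ginAggregate {β : Type*} {T : Set β} (hT : T.Finite) (Δ : ℕ) :
    ∃ (c : ℝ) (f : β → ℝ), InjOn f T ∧ InjOn (ginAggregate c f) (boundedNodes Δ T) := by
  obtain ⟨N, idx, hidx, hidxN⟩ := hT.exists_injOn_lt
  refine ⟨((Δ + 2) ^ N : ℕ), fun t => ((Δ + 2) ^ idx t : ℕ), fun s hs t ht h => ?_,
    fun p hp q hq h => injOn_pow_aggregate (B := Δ + 2) hidx hidxN (by omega) hp hq ?_⟩
  · exact hidx hs ht (Nat.pow_right_injective (by omega) (Nat.cast_injective h))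
  · apply Nat.cast_injective (R := ℝ)
    simpa [ginAggregate, Nat.cast_multiset_sum, Multiset.map_map, Function.comp_def] using h

def boundedTrees {α : Type} (Δ : ℕ) (L : Set α) : (k : ℕ) → Set (TreeT α k)
  | 0 => L
  | k + 1 => boundedNodes Δ (boundedTrees Δ L k)

theorem finite_boundedTrees {α : Type} {L : Set α} (hL : L.Finite) (Δ : ℕ) :
    ∀ k, (boundedTrees Δ L k).Finite
  | 0 => hL
  | k + 1 => finite_boundedNodes (finite_boundedTrees hL Δ k) Δ

theorem levelTree_mem_boundedTrees {V α : Type} [Fintype V] (G : SimpleGraph V) {Δ : ℕ}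
    (hdeg : ∀ w, (G.neighborSet w).ncard ≤ Δ) {L : Set α} {a : V → α} (ha : ∀ w, a w ∈ L) :
    ∀ k v, levelTree G a k v ∈ boundedTrees Δ L k
  | 0, v => ha v
  | k + 1, v => by
    refine ⟨levelTree_mem_boundedTrees G hdeg ha k v, ?_, ?_⟩
    · simp only [levelTree, Multiset.mem_map]
      rintro _ ⟨u, -, rfl⟩
      exact levelTree_mem_boundedTrees G hdeg ha k u
    · rw [levelTree, Multiset.card_map, Finset.card_val, ← Set.ncard_coe_finset,
        SimpleGraph.coe_neighborFinset]
      exact hdeg v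

theorem GINemb_eq_of_mlp_eq {dIn dOut : ℕ} (θ : GINParams dIn dOut) {V α : Type} [Fintype V]
    (G : SimpleGraph V) (h : V → Fin dIn → ℝ) (a : V → α) (enc : (k : ℕ) → TreeT α k → ℝ)
    (h0 : ∀ v i, θ.mlp0 (h v) i = enc 0 (a v))
    (hstep : ∀ k v (y : Fin (θ.dims k) → ℝ),
      (∀ j, y j = ginAggregate (1 + θ.eps (k + 1)) (enc k) (levelTree G a (k + 1) v)) →
      ∀ i, θ.mlp k y i = enc (k + 1) (levelTree G a (k + 1) v)) :
    ∀ k v i, GINemb θ G h k v i = enc k (levelTree G a k v)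
  | 0, v, i => h0 v i
  | k + 1, v, i => by
    refine hstep k v _ (fun j => ?_) i
    simp only [GINemb_eq_of_mlp_eq θ G h a enc h0 hstep k, ginAggregate, levelTree,
      Multiset.map_map]
    rfl

theorem exists_GINParams_forall_GINemb_eq {α : Type} {d : ℕ} (Δ K : ℕ) {L : Set α}
    (hL : L.Finite) {e : α → Fin d → ℝ} (he : InjOn e L) :
    ∃ (θ : GINParams d 1) (enc : (k : ℕ) → TreeT α k → ℝ), θ.K = K ∧
      (∀ k, InjOn (enc k) (boundedTrees Δ L k)) ∧
      ∀ (V : Type) [Fintype V] (G : SimpleGraph V) (a : V → α),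
        (∀ w, (G.neighborSet w).ncard ≤ Δ) → (∀ w, a w ∈ L) →
        ∀ k v i, GINemb θ G (e ∘ a) k v i = enc k (levelTree G a k v) := by
  choose c enc henc hagg using fun k => (finite_boundedTrees hL Δ k).exists_injOn_ginAggregate Δ
  choose mlp0 hmlp0 hmlp0_eq using exists_isMLP_comp_eqOn hL he fun p (_ : Fin 1) => enc 0 p
  choose mlp hmlp hmlp_eq using fun k =>
    exists_isMLP_comp_eqOn (finite_boundedTrees hL Δ (k + 1))
      (e := fun p (_ : Fin 1) => ginAggregate (c k) (enc k) p)
      (fun p hp q hq h => hagg k hp hq (congrFun h 0)) fun p (_ : Fin 1) => enc (k + 1) p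
  -- layer `k + 1` reads `θ.eps (k + 1)`, so it multiplies the root's code by `c k`
  refine ⟨⟨K, fun _ => 1, rfl, mlp0, mlp, fun n => c (n - 1) - 1, hmlp0, hmlp⟩, enc, rfl, henc, ?_⟩
  intro V _ G a hdeg ha
  refine GINemb_eq_of_mlp_eq _ G _ a enc (fun v i => congrFun (hmlp0_eq _ (ha v)) i)
    fun k v y hy i => ?_
  obtain rfl : y = fun _ => ginAggregate (c k) (enc k) (levelTree G a (k + 1) v) :=
    funext fun j => by simp [hy j]
  exact congrFun (hmlp_eq k _ (levelTree_mem_boundedTrees G hdeg ha (k + 1) v)) i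

theorem stmt_12_general (Δ : ℕ) (dI dr : ℕ)
    (C : Set (Fin dI → ℝ)) (hC : C.Finite)
    (D : Set (Fin dr → ℝ)) (hD : D.Finite)
    (l : ℕ) :
    ∃ (dOut : ℕ) (θ : GINParams (dI + dr) dOut),
      ∀ (V V' : Type) [Fintype V] [Fintype V']
        (G : SimpleGraph V) (G' : SimpleGraph V'),
        G.Connected → G'.Connected →
        (∀ w : V, (G.neighborSet w).ncard ≤ Δ) →
        (∀ w : V', (G'.neighborSet w).ncard ≤ Δ) →
        ∀ (x : V → Fin dI → ℝ) (x' : V' → Fin dI → ℝ),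
          (∀ w, x w ∈ C) → (∀ w, x' w ∈ C) →
        ∀ (r : V → Fin dr → ℝ) (r' : V' → Fin dr → ℝ),
          (∀ w, r w ∈ D) → (∀ w, r' w ∈ D) →
        ∀ (v : V) (v' : V'),
          levelTree G (fun u => (x u, r u)) l v ≠
            levelTree G' (fun u => (x' u, r' u)) l v' →
          GINout θ G (fun u => Fin.append (x u) (r u)) v ≠
            GINout θ G' (fun u => Fin.append (x' u) (r' u)) v' := by
  obtain ⟨θ, enc, rfl, henc, hemb⟩ := exists_GINParams_forall_GINemb_eq Δ l (hC.prod hD)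
    (Fin.appendEquiv dI dr).injective.injOn
  refine ⟨1, θ, fun V V' _ _ G G' _ _ hdeg hdeg' x x' hx hx' r r' hr hr' v v' hne hout => hne ?_⟩
  have hlabels : ∀ {W : Type} (x : W → Fin dI → ℝ) (r : W → Fin dr → ℝ), (∀ w, x w ∈ C) →
      (∀ w, r w ∈ D) → ∀ w, (x w, r w) ∈ C ×ˢ D := fun x r hx hr w => ⟨hx w, hr w⟩
  refine henc θ.K (levelTree_mem_boundedTrees G hdeg (hlabels x r hx hr) θ.K v)
    (levelTree_mem_boundedTrees G' hdeg' (hlabels x' r' hx' hr') θ.K v') ?_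
  exact (hemb V G _ hdeg (hlabels x r hx hr) _ v _).symm.trans
    ((congrFun hout 0).trans (hemb V' G' _ hdeg' (hlabels x' r' hx' hr') _ v' _))

/-- For every `Δ ≥ 1`, finite sets `𝒞 ⊂ ℝ^{d_I}` and `D ⊂ ℝ^{d_r}`, and
positive integer `l`, there exist GIN parameters `θ` such that for all finite connected
simple graphs `G, G'` with maximum degree at most `Δ`, features in `𝒞`, labelings in `D`,
and vertices `v, v'`: if the level-`l` trees (with labels `a_u = (x_u, r_u)`) differ,
then the GIN (run with concatenated input features `(x_u, r_u)`) produces different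
output embeddings at `v` and `v'`. -/
theorem stmt_12 (Δ : ℕ) (hΔ : 1 ≤ Δ) (dI dr : ℕ)
    (C : Set (Fin dI → ℝ)) (hC : C.Finite)
    (D : Set (Fin dr → ℝ)) (hD : D.Finite)
    (l : ℕ) (hl : 0 < l) :
    ∃ (dOut : ℕ) (θ : GINParams (dI + dr) dOut),
      ∀ (V V' : Type) [Fintype V] [Fintype V']
        (G : SimpleGraph V) (G' : SimpleGraph V'),
        G.Connected → G'.Connected →
        (∀ w : V, (G.neighborSet w).ncard ≤ Δ) →
        (∀ w : V', (G'.neighborSet w).ncard ≤ Δ) →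
        ∀ (x : V → Fin dI → ℝ) (x' : V' → Fin dI → ℝ),
          (∀ w, x w ∈ C) → (∀ w, x' w ∈ C) →
        ∀ (r : V → Fin dr → ℝ) (r' : V' → Fin dr → ℝ),
          (∀ w, r w ∈ D) → (∀ w, r' w ∈ D) →
        ∀ (v : V) (v' : V'),
          levelTree G (fun u => (x u, r u)) l v ≠
            levelTree G' (fun u => (x' u, r' u)) l v' →
          GINout θ G (fun u => Fin.append (x u) (r u)) v ≠
            GINout θ G' (fun u => Fin.append (x' u) (r' u)) v' :=
  stmt_12_general Δ dI dr C hC D hD l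
end
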